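/- With the construction of the previous context (vertex set V' ∪ E ∪ {p}, local score f_v(E_v ∪ {p}) = 1 for v ∈ V' and all other parent-set scores 0), the maximum score of a polytree on V' ∪ E ∪ {p} in which every node's parent set is either empty or equal to E_v ∪ {p} equals the maximum size of an independent set of G. -/

import Mathlib

/-! If adjacent `u, v` both lie in `I`, the skeleton contains the 4-cycle
`u – p – v – uv – u`. Conversely, if `I` is independent, an edge node has at most one
neighbour, so it lies on no cycle. The two neighbours of a vertex node on a cycle would then
both be `p`; so a cycle could visit only `p`, which is absurd. -/

/-- The skeleton (underlying undirected graph) of the directed graph built from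
a graph `G` and a vertex subset `I`: nodes are the vertices of `G`, the edges
of `G`, and one extra node `p`; each `v ∈ I` has parent set `E_v ∪ {p}` (all
incident edge nodes together with `p`), all other nodes have no parents. -/
def ptSkeleton {V : Type*} (G : SimpleGraph V) (I : Set V) :
    SimpleGraph (V ⊕ (G.edgeSet ⊕ Unit)) :=
  SimpleGraph.fromRel (fun a b =>
    match a, b with
    | Sum.inr (Sum.inl e), Sum.inl v => v ∈ I ∧ v ∈ (e : Sym2 V)
    | Sum.inr (Sum.inr _), Sum.inl v => v ∈ I
    | _, _ => False)

namespace SimpleGraph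

variable {W : Type*} {H : SimpleGraph W}

lemma Walk.IsCycle.exists_adj_ne_of_mem_support {u v : W} {c : H.Walk u u} (hc : c.IsCycle)
    (hv : v ∈ c.support) :
    ∃ x ∈ c.support, ∃ y ∈ c.support, x ≠ y ∧ H.Adj v x ∧ H.Adj v y := by
  classical
  have hc' := hc.rotate hv
  refine ⟨(c.rotate v hv).snd, ?_, (c.rotate v hv).penultimate, ?_, hc'.snd_ne_penultimate,
    Walk.adj_snd hc'.not_nil, (Walk.adj_penultimate hc'.not_nil).symm⟩ <;>
  · rw [← Walk.mem_support_rotate_iff c v hv]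
    exact Walk.getVert_mem_support _ _

lemma IsAcyclic.eq_of_adj_of_adj {a b x y : W} (hG : H.IsAcyclic) (hab : a ≠ b)
    (hax : H.Adj a x) (hxb : H.Adj x b) (hay : H.Adj a y) (hyb : H.Adj y b) : x = y := by
  let px : H.Path a b :=
    ⟨.cons hax (.cons hxb .nil), (Path.singleton hxb).2.cons (by simp [hax.ne, hab])⟩
  let py : H.Path a b :=
    ⟨.cons hay (.cons hyb .nil), (Path.singleton hyb).2.cons (by simp [hay.ne, hab])⟩
  have hpxy : px = py := (hG.subsingleton_path a b).elim px py
  simpa [px, py] using congrArg (fun p : H.Path a b => p.1.support) hpxy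

end SimpleGraph

section ptSkeleton

open SimpleGraph Sum

variable {V : Type*} {G : SimpleGraph V} {I : Set V}

@[simp]
lemma ptSkeleton_not_adj_inl_inl (u v : V) : ¬ (ptSkeleton G I).Adj (inl u) (inl v) := by
  simp [ptSkeleton]

@[simp]
lemma ptSkeleton_not_adj_inr_inr (x y : G.edgeSet ⊕ Unit) :
    ¬ (ptSkeleton G I).Adj (inr x) (inr y) := by
  rcases x with _ | _ <;> rcases y with _ | _ <;> simp [ptSkeleton]

@[simp]
lemma ptSkeleton_adj_inl_edge_iff {v : V} {e : G.edgeSet} :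
    (ptSkeleton G I).Adj (inl v) (inr (inl e)) ↔ v ∈ I ∧ v ∈ (e : Sym2 V) := by
  simp [ptSkeleton]

@[simp]
lemma ptSkeleton_adj_inl_apex_iff {v : V} {t : Unit} :
    (ptSkeleton G I).Adj (inl v) (inr (inr t)) ↔ v ∈ I := by
  simp [ptSkeleton]

lemma indep_of_ptSkeleton_isAcyclic (h : (ptSkeleton G I).IsAcyclic) :
    ∀ u ∈ I, ∀ v ∈ I, ¬ G.Adj u v := by
  intro u hu v hv huv
  let e : G.edgeSet := ⟨s(u, v), huv⟩
  have := h.eq_of_adj_of_adj (a := inl u) (b := inl v) (x := inr (inr ()))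
    (y := inr (inl e)) (by simpa using huv.ne) (by simpa using hu)
    (by simpa [adj_comm] using hv) (by simpa [e] using hu) (by simpa [adj_comm, e] using hv)
  simp at this

lemma ptSkeleton_isAcyclic_of_indep (hI : ∀ u ∈ I, ∀ v ∈ I, ¬ G.Adj u v) :
    (ptSkeleton G I).IsAcyclic := by
  intro a c hc
  -- an edge node is adjacent to at most one node of an independent `I`
  have edge_not_mem (e : G.edgeSet) : inr (inl e) ∉ c.support := by
    intro he
    obtain ⟨_ | _ | _, -, _ | _ | _, -, hxy, hx, hy⟩ := hc.exists_adj_ne_of_mem_support he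
    case inl.inl u w =>
      rw [adj_comm, ptSkeleton_adj_inl_edge_iff] at hx hy
      have huw : u ≠ w := fun h => hxy (congrArg inl h)
      refine hI u hx.1 w hy.1 ?_
      rw [← mem_edgeSet, ← (Sym2.mem_and_mem_iff huw).mp ⟨hx.2, hy.2⟩]
      exact e.2
    all_goals simp_all
  have mem_apex : ∀ z ∈ c.support, z = inr (inr ()) := by
    rintro (v | e | ⟨⟩) hz
    · have nbr_apex :
          ∀ z ∈ c.support, (ptSkeleton G I).Adj (inl v) z → z = inr (inr ()) := by
        rintro (_ | e | ⟨⟩) hz hvz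
        exacts [absurd hvz (by simp), absurd hz (edge_not_mem e), rfl]
      obtain ⟨x, hx, y, hy, hxy, hvx, hvy⟩ := hc.exists_adj_ne_of_mem_support hz
      exact absurd ((nbr_apex x hx hvx).trans (nbr_apex y hy hvy).symm) hxy
    exacts [absurd hz (edge_not_mem e), rfl]
  exact (c.adj_snd hc.not_nil).ne
    ((mem_apex _ c.start_mem_support).trans (mem_apex _ (c.getVert_mem_support 1)).symm)

theorem ptSkeleton_isAcyclic_iff :
    (ptSkeleton G I).IsAcyclic ↔ ∀ u ∈ I, ∀ v ∈ I, ¬ G.Adj u v :=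
  ⟨indep_of_ptSkeleton_isAcyclic, ptSkeleton_isAcyclic_of_indep⟩

end ptSkeleton

/-- A reasonable polytree is determined by the set `I` of nodes with parent set `E_v ∪ {p}`;
it is a polytree iff `ptSkeleton G I` is acyclic, and its score is `|I|`. -/
theorem stmt_7_general {V : Type*} (G : SimpleGraph V) :
    sSup {m : ℕ | ∃ I : Finset V, (ptSkeleton G (I : Set V)).IsAcyclic ∧ m = I.card}
      = sSup {m : ℕ | ∃ I : Finset V, (∀ u ∈ I, ∀ v ∈ I, ¬ G.Adj u v) ∧ m = I.card} := by
  simp only [ptSkeleton_isAcyclic_iff, Finset.mem_coe]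

/-- In the constructed instance (scores: `f_v(E_v ∪ {p}) = 1` for `v ∈ V'`, all
other parent sets score `0`), a reasonable polytree is determined by the set
`I` of nodes with non-empty parent set, its structure is a polytree iff its
skeleton is acyclic, and its score is `|I|`.  The maximum score of a
reasonable polytree equals the maximum size of an independent set of `G`. -/
theorem stmt_7 {V : Type*} [Fintype V] (G : SimpleGraph V) :
    sSup {m : ℕ | ∃ I : Finset V, (ptSkeleton G (I : Set V)).IsAcyclic ∧ m = I.card}
      = sSup {m : ℕ | ∃ I : Finset V, (∀ u ∈ I, ∀ v ∈ I, ¬ G.Adj u v) ∧ m = I.card} :=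
  stmt_7_general G
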